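/- Let H be a Hopf algebra with bijective antipode and B ⊆ P a faithfully flat right H-Galois extension. Then for any algebra automorphism F of P that is right H-colinear and restricts to the identity on B, and any p, q ∈ P with Σ p ⊗ q ∈ L(P,H), the element F(p)q lies in B, and the assignment σ_F(p ⊗ q) = F(p)q satisfies F(pp')q'q = F(p F(p')q')q for all Σ p ⊗ q, Σ p' ⊗ q' ∈ L(P,H). -/
import Mathlib


/-!
STATEMENT 18: Let `H` be a Hopf algebra with bijective antipode and `B ⊆ P` a
faithfully flat right `H`-Galois extension.  For any `H`-colinear algebra
automorphism `F` of `P` restricting to the identity on `B`, and any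
`Σ p ⊗ q ∈ L(P,H) = (P ⊗ P)^{coH}`, the element `Σ F(p) q` lies in `B`, and
the map `σ_F(p ⊗ q) = F(p) q` satisfies
`σ_F((p ⊗ q)(p' ⊗ q')) = σ_F((p ⊗ q) · σ_F(p' ⊗ q'))`, concretely
`F(p p') q' q = F(p F(p') q') q`.

`L(P,H)` is realised inside `P ⊗ Pᵐᵒᵖ` (so that the product is
`(p ⊗ q)(p' ⊗ q') = p p' ⊗ q' q`).
-/

open TensorProduct LinearMap MulOpposite

noncomputable section

variable (k H P : Type) [Field k] [Ring H] [HopfAlgebra k H] [Ring P] [Algebra k P]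

variable (k H P : Type) [Field k] [Ring H] [HopfAlgebra k H] [Ring P] [Algebra k P]

/-- `δ` is a (coassociative, counital) right `H`-comodule structure on `P`. -/
def IsRightComodule (δ : P →ₗ[k] P ⊗[k] H) : Prop :=
  (∀ p, (TensorProduct.rid k P) ((lTensor P Coalgebra.counit) (δ p)) = p) ∧
  (∀ p, (TensorProduct.assoc k P H H) ((rTensor H δ) (δ p))
      = (lTensor P Coalgebra.comul) (δ p))

/-- `δ` makes `P` a right `H`-comodule algebra. -/
def IsComodAlg (δ : P →ₗ[k] P ⊗[k] H) : Prop :=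
  IsRightComodule k H P δ ∧ (∀ p q : P, δ (p * q) = δ p * δ q) ∧ δ 1 = 1

/-- The coinvariant subalgebra `B = P^{coH}` (as a subset). -/
def coinv (δ : P →ₗ[k] P ⊗[k] H) : Set P := {p | δ p = p ⊗ₜ[k] (1 : H)}

/-- The canonical Galois map lifted to `P ⊗_k P`: `p ⊗ q ↦ p q₍₀₎ ⊗ q₍₁₎`. -/
def canMap (δ : P →ₗ[k] P ⊗[k] H) : P ⊗[k] P →ₗ[k] P ⊗[k] H :=
  (rTensor H (mul' k P)) ∘ₗ (TensorProduct.assoc k P P H).symm.toLinearMap ∘ₗ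
    (lTensor P δ)

/-- The `B`-balancing relations defining `P ⊗_B P` inside `P ⊗_k P`. -/
def galRel (δ : P →ₗ[k] P ⊗[k] H) : Submodule k (P ⊗[k] P) :=
  Submodule.span k {z | ∃ p q b, b ∈ coinv k H P δ ∧
    z = (p * b) ⊗ₜ[k] q - p ⊗ₜ[k] (b * q)}

/-- `B ⊆ P` is a right `H`-Galois extension: the canonical map descends to a
bijection `P ⊗_B P → P ⊗ H`. -/
def IsGaloisExt (δ : P →ₗ[k] P ⊗[k] H) : Prop :=
  Function.Surjective (canMap k H P δ) ∧ ker (canMap k H P δ) = galRel k H P δ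

/-- The canonical Galois map lifted to `P ⊗_k Pᵐᵒᵖ`:
`p ⊗ q ↦ p q₍₀₎ ⊗ q₍₁₎`. -/
def canMapOp (δ : P →ₗ[k] P ⊗[k] H) : P ⊗[k] Pᵐᵒᵖ →ₗ[k] P ⊗[k] H :=
  (rTensor H (mul' k P)) ∘ₗ (TensorProduct.assoc k P P H).symm.toLinearMap ∘ₗ
    (lTensor P (δ ∘ₗ (MulOpposite.opLinearEquiv k (M := P)).symm.toLinearMap))

/-- The `B`-balancing relations defining `P ⊗_B P` inside `P ⊗_k Pᵐᵒᵖ`. -/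
def galRelOp (δ : P →ₗ[k] P ⊗[k] H) : Submodule k (P ⊗[k] Pᵐᵒᵖ) :=
  Submodule.span k {z | ∃ p q b, b ∈ coinv k H P δ ∧
    z = (p * b) ⊗ₜ[k] (MulOpposite.op q) - p ⊗ₜ[k] (MulOpposite.op (b * q))}

/-- `B ⊆ P` is a right `H`-Galois extension (formulated on `P ⊗_k Pᵐᵒᵖ`). -/
def IsGaloisExtOp (δ : P →ₗ[k] P ⊗[k] H) : Prop :=
  Function.Surjective (canMapOp k H P δ) ∧
    ker (canMapOp k H P δ) = galRelOp k H P δ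

/-- The codiagonal right `H`-coaction on `P ⊗ Pᵐᵒᵖ`:
`p ⊗ q ↦ (p₍₀₎ ⊗ q₍₀₎) ⊗ p₍₁₎ q₍₁₎`. -/
def codiagCoaction (δ : P →ₗ[k] P ⊗[k] H) :
    P ⊗[k] Pᵐᵒᵖ →ₗ[k] (P ⊗[k] Pᵐᵒᵖ) ⊗[k] H :=
  (lTensor (P ⊗[k] Pᵐᵒᵖ) (mul' k H)) ∘ₗ
    (TensorProduct.tensorTensorTensorComm k P H Pᵐᵒᵖ H).toLinearMap ∘ₗ
    (TensorProduct.map δ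
      ((rTensor H (MulOpposite.opLinearEquiv k (M := P)).toLinearMap) ∘ₗ δ ∘ₗ
        (MulOpposite.opLinearEquiv k (M := P)).symm.toLinearMap))

/-- The Ehresmann bialgebroid `L(P,H) ⊆ P ⊗ Pᵐᵒᵖ`:
coinvariants of the codiagonal coaction. -/
def ehresmann (δ : P →ₗ[k] P ⊗[k] H) : Set (P ⊗[k] Pᵐᵒᵖ) :=
  {x | codiagCoaction k H P δ x = x ⊗ₜ[k] (1 : H)}

variable (B : Type) [Ring B] [Algebra k B] (ι : B →ₐ[k] P)

/-- The `B`-balancing relations in `P ⊗_k M` for a left `B`-module `M`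
(`B` mapped into `P` by `ι`); the quotient is `P ⊗_B M`. -/
def modRel (M : Type) [AddCommGroup M] [Module k M] [Module B M] :
    Submodule k (P ⊗[k] M) :=
  Submodule.span k {z | ∃ p b m, z = (p * ι b) ⊗ₜ[k] m - p ⊗ₜ[k] (b • m)}

/-- `P` is faithfully flat over `B` (for the functor `M ↦ P ⊗_B M`):
tensoring preserves and reflects injectivity of `B`-module maps. -/
def PFaithfullyFlat : Prop :=
  ∀ (M N : Type) [AddCommGroup M] [Module k M] [Module B M]
    [AddCommGroup N] [Module k N] [Module B N]
    (f : M →ₗ[k] N), (∀ (b : B) (m : M), f (b • m) = b • f m) →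
    (Function.Injective f ↔
      ker ((modRel k P B ι N).mkQ ∘ₗ lTensor P f) = modRel k P B ι M)

/-- The `B`-balancing relations in `M ⊗_k P` for a right `B`-module `M`
(given as a left `Bᵐᵒᵖ`-module); the quotient is `M ⊗_B P`. -/
def modRelL (M : Type) [AddCommGroup M] [Module k M] [Module Bᵐᵒᵖ M] :
    Submodule k (M ⊗[k] P) :=
  Submodule.span k {z | ∃ (m : M) (b : B) (p : P),
    z = m ⊗ₜ[k] (ι b * p) - ((MulOpposite.op b) • m) ⊗ₜ[k] p}

/-- `P` is faithfully flat over `B` (for the functor `M ↦ M ⊗_B P`). -/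
def PFaithfullyFlatL : Prop :=
  ∀ (M N : Type) [AddCommGroup M] [Module k M] [Module Bᵐᵒᵖ M]
    [AddCommGroup N] [Module k N] [Module Bᵐᵒᵖ N]
    (f : M →ₗ[k] N), (∀ (b : Bᵐᵒᵖ) (m : M), f (b • m) = b • f m) →
    (Function.Injective f ↔
      ker ((modRelL k P B ι N).mkQ ∘ₗ rTensor P f) = modRelL k P B ι M)

/-- The map `σ_F : P ⊗ Pᵐᵒᵖ → P`, `p ⊗ q ↦ F(p) q`. -/
def sigmaF (F : P ≃ₐ[k] P) : P ⊗[k] Pᵐᵒᵖ →ₗ[k] P :=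
  (mul' k P) ∘ₗ (TensorProduct.map F.toLinearMap
    (opLinearEquiv k (M := P)).symm.toLinearMap)

lemma sigmaF_tmul (F : P ≃ₐ[k] P) (p q : P) :
    sigmaF k P F (p ⊗ₜ[k] op q) = F p * q := by
  simp [sigmaF, LinearMap.mul'_apply]

lemma sigmaF_mul_tmul (F : P ≃ₐ[k] P) (p q : P) (y : P ⊗[k] Pᵐᵒᵖ) :
    sigmaF k P F ((p ⊗ₜ[k] op q) * y) = F p * sigmaF k P F y * q := by
  induction y using TensorProduct.induction_on with
  | zero => simp
  | tmul a b =>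
    rw [← op_unop b, Algebra.TensorProduct.tmul_mul_tmul, ← op_mul, sigmaF_tmul,
      sigmaF_tmul, map_mul]
    simp [mul_assoc]
  | add a b ha hb =>
    rw [mul_add, map_add, map_add, ha, hb, mul_add, add_mul]

lemma codiag_aux (F : P ≃ₐ[k] P) (u v : P ⊗[k] H) :
    ((rTensor H (sigmaF k P F)) ∘ₗ (lTensor (P ⊗[k] Pᵐᵒᵖ) (mul' k H)) ∘ₗ
        (TensorProduct.tensorTensorTensorComm k P H Pᵐᵒᵖ H).toLinearMap)
      (u ⊗ₜ[k] (rTensor H (MulOpposite.opLinearEquiv k (M := P)).toLinearMap v))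
      = (rTensor H F.toLinearMap u) * v := by
  induction u using TensorProduct.induction_on with
  | zero =>
    rw [zero_tmul, LinearMap.map_zero, LinearMap.map_zero, zero_mul]
  | add a b ha hb =>
    rw [add_tmul, LinearMap.map_add, LinearMap.map_add, add_mul, ha, hb]
  | tmul a h =>
    induction v using TensorProduct.induction_on with
    | zero => rw [LinearMap.map_zero, tmul_zero, LinearMap.map_zero, mul_zero]
    | add a' b' ha' hb' =>
      rw [LinearMap.map_add, tmul_add, LinearMap.map_add, mul_add, ha', hb']
    | tmul b g =>
      simp [tensorTensorTensorComm_tmul, mul'_apply, sigmaF_tmul,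
        Algebra.TensorProduct.tmul_mul_tmul]

lemma codiag_tmul (δ : P →ₗ[k] P ⊗[k] H) (p q : P) :
    codiagCoaction k H P δ (p ⊗ₜ[k] op q)
      = ((lTensor (P ⊗[k] Pᵐᵒᵖ) (mul' k H)) ∘ₗ
          (TensorProduct.tensorTensorTensorComm k P H Pᵐᵒᵖ H).toLinearMap)
        ((δ p) ⊗ₜ[k]
          (rTensor H (MulOpposite.opLinearEquiv k (M := P)).toLinearMap (δ q))) := by
  simp [codiagCoaction]

lemma delta_sigmaF (δ : P →ₗ[k] P ⊗[k] H) (hδ : IsComodAlg k H P δ)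
    (F : P ≃ₐ[k] P)
    (hFcol : ∀ p : P, δ (F p) = (rTensor H F.toLinearMap) (δ p))
    (z : P ⊗[k] Pᵐᵒᵖ) :
    δ (sigmaF k P F z)
      = rTensor H (sigmaF k P F) (codiagCoaction k H P δ z) := by
  induction z using TensorProduct.induction_on with
  | zero => simp
  | add a b ha hb => simp [ha, hb]
  | tmul p q =>
    rw [← op_unop q, sigmaF_tmul, hδ.2.1, hFcol, codiag_tmul]
    exact (codiag_aux k H P F (δ p) (δ (unop q))).symm

theorem automorphism_gives_bisection
    (Sinv : H →ₗ[k] H)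
    (hS₁ : ∀ h, Sinv (HopfAlgebra.antipode (R := k) h) = h)
    (hS₂ : ∀ h, HopfAlgebra.antipode (R := k) (Sinv h) = h)
    (δ : P →ₗ[k] P ⊗[k] H) (hδ : IsComodAlg k H P δ)
    (hGal : IsGaloisExtOp k H P δ)
    (hι : Function.Injective ι ∧ Set.range ι = coinv k H P δ)
    (hff : PFaithfullyFlat k P B ι) (hffL : PFaithfullyFlatL k P B ι)
    (F : P ≃ₐ[k] P)
    (hFcol : ∀ p : P, δ (F p) = (rTensor H F.toLinearMap) (δ p))
    (hFB : ∀ b ∈ coinv k H P δ, F b = b) :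
    (∀ x ∈ ehresmann k H P δ, sigmaF k P F x ∈ coinv k H P δ) ∧
    (∀ x ∈ ehresmann k H P δ, ∀ y ∈ ehresmann k H P δ,
      sigmaF k P F (x * y)
        = sigmaF k P F (x * ((sigmaF k P F y) ⊗ₜ[k] (op (1 : P))))) := by
  have key : ∀ x ∈ ehresmann k H P δ, sigmaF k P F x ∈ coinv k H P δ := by
    intro x hx
    have h1 := delta_sigmaF k H P δ hδ F hFcol x
    rw [hx] at h1
    simpa [coinv] using h1
  refine ⟨key, ?_⟩
  intro x hx y hy
  clear hx
  have hFc : F (sigmaF k P F y) = sigmaF k P F y := hFB _ (key y hy)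
  induction x using TensorProduct.induction_on with
  | zero => simp
  | add a b ha hb => rw [add_mul, add_mul, map_add, map_add, ha, hb]
  | tmul p q =>
    rw [← op_unop q, sigmaF_mul_tmul, sigmaF_mul_tmul, sigmaF_tmul, hFc, mul_one]

end
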